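/- arXiv:1504.01464 — 2 statements merged into one kernel-verified Lean document; each statement's English description precedes it below -/
import Mathlib

section
/- Let (G, B, β, ω) be a twisted C*-dynamical system and E a Hilbert (G,B,β,ω)-module with twisted action γ. For ξ ∈ E define Bra(ξ) ζ = [x ↦ ⟨γ_x ξ, ζ⟩_E] and Ket(ξ)[f] = ∫_G γ_x(ξ) · f(x) dx for f ∈ L^{∞,c}(G,B). Then ⟨[f], Bra(ξ) ζ⟩_{L²} = ⟨Ket(ξ)[f], ζ⟩_E for every ξ with Bra(ξ) taking values in L²(G,B), every f ∈ L^{∞,c}(G,B), and every ζ ∈ E. -/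
open MeasureTheory MultiplierAlgebra

/-- A (Busby–Smith) twisted C*-dynamical system `(G, B, β, ω)`: `β : G → Aut(B)` is strongly
measurable, `ω : G × G → U(M(B))` is strictly measurable, with `β₁ = id`, `ω(1,s) = ω(s,1) = 1`,
`β_s ∘ β_t = Ad(ω(s,t)) ∘ β_{st}` and `β_r(ω(s,t)) ω(r,st) = ω(r,s) ω(rs,t)`. -/
structure TwistedSystem (G : Type*) [Group G] [TopologicalSpace G] [MeasurableSpace G]
    (B : Type*) [NonUnitalCStarAlgebra B] where
  β : G → B ≃⋆ₐ[ℂ] B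
  ω : G → G → 𝓜(ℂ, B)
  ω_unitary : ∀ s t, ω s t ∈ unitary (𝓜(ℂ, B))
  β_strMeas : ∀ b : B, StronglyMeasurable fun s => β s b
  ω_strMeas_left : ∀ b : B, StronglyMeasurable fun p : G × G => (ω p.1 p.2).fst b
  ω_strMeas_right : ∀ b : B, StronglyMeasurable fun p : G × G => (ω p.1 p.2).snd b
  β_one : ∀ b, β 1 b = b
  ω_one_left : ∀ s, ω 1 s = 1
  ω_one_right : ∀ s, ω s 1 = 1
  βM : G → 𝓜(ℂ, B) ≃⋆ₐ[ℂ] 𝓜(ℂ, B)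
  βM_coe : ∀ (s : G) (b : B), βM s (b : 𝓜(ℂ, B)) = ((β s b : B) : 𝓜(ℂ, B))
  ad : ∀ (s t : G) (b : B),
    ((β s (β t b) : B) : 𝓜(ℂ, B)) = ω s t * ((β (s * t) b : B) : 𝓜(ℂ, B)) * star (ω s t)
  cocycle : ∀ r s t : G, βM r (ω s t) * ω r (s * t) = ω r s * ω (r * s) t

/-- The twisted left regular action `Γ` on `B`-valued functions:
`(Γ_s φ)(x) = ω(s, s⁻¹x)* · β_s(φ(s⁻¹x))`. -/
noncomputable def twistedGamma {G : Type*} [Group G] [TopologicalSpace G] [MeasurableSpace G]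
    {B : Type*} [NonUnitalCStarAlgebra B]
    (T : TwistedSystem G B) (s : G) (φ : G → B) : G → B :=
  fun x => (star (T.ω s (s⁻¹ * x))).fst (T.β s (φ (s⁻¹ * x)))

open scoped RightActions

/-- The December 2024 Mathlib notion of a (right) Hilbert C⋆-module, `CStarModule`, with its old
meaning: right action of `Aᵐᵒᵖ`, inner product linear and right-`A`-linear in the second slot. -/
class OldCStarModule (A : outParam <| Type*) (E : Type*) [NonUnitalSemiring A] [StarRing A]
    [Module ℂ A] [AddCommGroup E] [Module ℂ E] [PartialOrder A] [SMul Aᵐᵒᵖ E] [Norm A] [Norm E]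
    extends Inner A E where
  inner_add_right {x} {y} {z} : inner x (y + z) = inner x y + inner x z
  inner_self_nonneg {x} : 0 ≤ inner x x
  inner_self {x} : inner x x = 0 ↔ x = 0
  inner_op_smul_right {a : A} {x y : E} : inner x (y <• a) = inner x y * a
  inner_smul_right_complex {z : ℂ} {x} {y} : inner x (z • y) = z • inner x y
  star_inner x y : star (inner x y) = inner y x
  norm_eq_sqrt_norm_inner_self x : ‖x‖ = √‖inner x x‖

/-- A Hilbert `(G,B,β,ω)`-module: a Hilbert C*-module `E` over `B` together with a strongly
measurable twisted action `γ` of `G` by isometric surjections satisfying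
`γ_s(ζ·b) = γ_s(ζ)·β_s(b)`, `⟨γ_s ζ, γ_s η⟩ = β_s⟨ζ,η⟩` and `γ_r γ_s(ζ) = γ_{rs}(ζ)·ω(r,s)*`,
where the right action of `M(B)` on `E` is the canonical extension of the `B`-action. -/
structure TwistedHilbertModule {G : Type*} [Group G] [TopologicalSpace G] [MeasurableSpace G]
    {B : Type*} [NonUnitalCStarAlgebra B] [PartialOrder B] [StarOrderedRing B]
    (T : TwistedSystem G B)
    (E : Type*) [NormedAddCommGroup E] [NormedSpace ℂ E] [CompleteSpace E]
    [SMul Bᵐᵒᵖ E] [OldCStarModule B E] where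
  γ : G → E → E
  γ_isometry : ∀ s, Isometry (γ s)
  γ_surjective : ∀ s, Function.Surjective (γ s)
  γ_add : ∀ s (x y : E), γ s (x + y) = γ s x + γ s y
  γ_strMeas : ∀ x : E, StronglyMeasurable fun s => γ s x
  γ_one : ∀ x : E, γ 1 x = x
  /-- The canonical extension of the right `B`-action on `E` to `M(B)`. -/
  smulM : 𝓜(ℂ, B) → E → E
  smulM_coe : ∀ (b : B) (x : E), smulM (b : 𝓜(ℂ, B)) x = x <• b
  inner_smulM : ∀ (m : 𝓜(ℂ, B)) (x y : E), (inner B x (smulM m y) : B) = m.snd (inner B x y)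
  γ_smul : ∀ (s : G) (x : E) (b : B), γ s (x <• b) = γ s x <• T.β s b
  γ_inner : ∀ (s : G) (x y : E), (inner B (γ s x) (γ s y) : B) = T.β s (inner B x y)
  γ_twist : ∀ (r s : G) (x : E), γ r (γ s x) = smulM (star (T.ω r s)) (γ (r * s) x)

/-!
Since each `γ_x` is isometric and `f`, being essentially bounded with compact support, is
integrable for the Haar measure, `x ↦ γ_x(ξ)·f(x)` is Bochner integrable. Pairing with `ζ` is a
bounded real-linear map `E → B` by Cauchy–Schwarz, so it commutes with the integral, and
`⟨γ_x(ξ)·f(x), ζ⟩ = f(x)* ⟨γ_x ξ, ζ⟩` pointwise.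
-/

namespace OldCStarModule

variable {B : Type*} [NonUnitalCStarAlgebra B] [PartialOrder B]
  {E : Type*} [NormedAddCommGroup E] [NormedSpace ℂ E] [SMul Bᵐᵒᵖ E] [OldCStarModule B E]

/-- A right Hilbert `B`-module is a left Hilbert `Bᵐᵒᵖ`-module in Mathlib's sense, so Mathlib's
Cauchy–Schwarz inequality and continuity of the inner product apply to it. -/
instance toCStarModuleMulOpposite : CStarModule Bᵐᵒᵖ E where
  inner x y := MulOpposite.op (inner B x y)
  inner_add_right := congrArg MulOpposite.op inner_add_right
  inner_self_nonneg := inner_self_nonneg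
  inner_self := MulOpposite.op_eq_zero_iff _ |>.trans inner_self
  inner_op_smul_right := congrArg MulOpposite.op inner_op_smul_right
  inner_smul_right_complex := congrArg MulOpposite.op inner_smul_right_complex
  star_inner x y := congrArg MulOpposite.op (star_inner x y)
  norm_eq_sqrt_norm_inner_self := norm_eq_sqrt_norm_inner_self

lemma inner_add_left {x y z : E} : (inner B (x + y) z : B) = inner B x z + inner B y z :=
  MulOpposite.op_injective <| CStarModule.inner_add_left (A := Bᵐᵒᵖ) (x := x) (y := y) (z := z)

lemma inner_smul_left_real {c : ℝ} {x y : E} : (inner B (c • x) y : B) = c • inner B x y :=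
  MulOpposite.op_injective <|
    CStarModule.inner_smul_left_real (A := Bᵐᵒᵖ) (z := c) (x := x) (y := y)

lemma inner_op_smul_left {a : B} {x y : E} : (inner B (x <• a) y : B) = star a * inner B x y :=
  MulOpposite.op_injective <|
    CStarModule.inner_op_smul_left (A := Bᵐᵒᵖ) (a := MulOpposite.op a) (x := x) (y := y)

lemma norm_sq_eq (x : E) : ‖x‖ ^ 2 = ‖(inner B x x : B)‖ :=
  CStarModule.norm_sq_eq Bᵐᵒᵖ (x := x)

lemma ext_inner_left {u v : E} (h : ∀ z : E, (inner B z u : B) = inner B z v) : u = v := by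
  have : (inner Bᵐᵒᵖ (u - v) (u - v) : Bᵐᵒᵖ) = 0 := by
    rw [CStarModule.inner_sub_right, sub_eq_zero]
    exact congrArg MulOpposite.op (h (u - v))
  exact sub_eq_zero.mp (CStarModule.inner_self.mp this)

lemma op_smul_add (x : E) (a b : B) : x <• (a + b) = x <• a + x <• b :=
  ext_inner_left fun z => by simp only [inner_op_smul_right, inner_add_right, mul_add]

lemma add_op_smul (x y : E) (a : B) : (x + y) <• a = x <• a + y <• a :=
  ext_inner_left fun z => by simp only [inner_op_smul_right, inner_add_right, add_mul]

lemma smul_op_smul (c : ℂ) (x : E) (a : B) : (c • x) <• a = c • (x <• a) :=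
  ext_inner_left fun z => by
    simp only [inner_op_smul_right, inner_smul_right_complex, smul_mul_assoc]

lemma op_smul_smul (c : ℂ) (x : E) (a : B) : x <• (c • a) = c • (x <• a) :=
  ext_inner_left fun z => by
    simp only [inner_op_smul_right, inner_smul_right_complex, mul_smul_comm]

lemma norm_op_smul_le (x : E) (a : B) : ‖x <• a‖ ≤ ‖x‖ * ‖a‖ := by
  refine (pow_le_pow_iff_left₀ (norm_nonneg _) (by positivity) two_ne_zero).mp ?_
  calc ‖x <• a‖ ^ 2 = ‖star a * inner B x x * a‖ := by
        rw [norm_sq_eq, inner_op_smul_right, inner_op_smul_left]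
    _ ≤ ‖star a‖ * ‖(inner B x x : B)‖ * ‖a‖ := norm_mul₃_le
    _ = (‖x‖ * ‖a‖) ^ 2 := by rw [norm_star, ← norm_sq_eq]; ring

lemma continuous_op_smul : Continuous fun p : E × B => p.1 <• p.2 :=
  (LinearMap.mkContinuous₂
    (LinearMap.mk₂ ℂ (fun x a => x <• a) add_op_smul smul_op_smul op_smul_add op_smul_smul) 1
    fun x a => by simpa using norm_op_smul_le x a).continuous₂

variable [StarOrderedRing B]

noncomputable def innerLeftCLM (ζ : E) : E →L[ℝ] B where
  toFun x := inner B x ζ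
  map_add' _ _ := inner_add_left
  map_smul' _ _ := inner_smul_left_real
  cont := MulOpposite.continuous_unop.comp <|
    (CStarModule.continuous_inner (A := Bᵐᵒᵖ)).comp (continuous_id.prodMk continuous_const)

theorem integral_inner_left [CompleteSpace E] {X : Type*} [MeasurableSpace X] {μ : Measure X}
    {g : X → E} (hg : Integrable g μ) (ζ : E) :
    ∫ x, (inner B (g x) ζ : B) ∂μ = inner B (∫ x, g x ∂μ) ζ :=
  (innerLeftCLM ζ).integral_comp_comm hg

end OldCStarModule

theorem MeasureTheory.Integrable.bdd_op_smul
    {B : Type*} [NonUnitalCStarAlgebra B] [PartialOrder B]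
    {E : Type*} [NormedAddCommGroup E] [NormedSpace ℂ E] [SMul Bᵐᵒᵖ E] [OldCStarModule B E]
    {X : Type*} [MeasurableSpace X] {μ : Measure X} {h : X → E} {f : X → B} {C : ℝ}
    (hf : Integrable f μ) (hh : AEStronglyMeasurable h μ) (hbound : ∀ᵐ x ∂μ, ‖h x‖ ≤ C) :
    Integrable (fun x => h x <• f x) μ := by
  refine (hf.norm.const_mul C).mono'
    (OldCStarModule.continuous_op_smul.comp_aestronglyMeasurable (hh.prodMk hf.1)) ?_
  filter_upwards [hbound] with x hx
  exact (OldCStarModule.norm_op_smul_le _ _).trans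
    (mul_le_mul_of_nonneg_right hx (norm_nonneg _))

theorem MeasureTheory.MemLp.integrable_of_hasCompactSupport {X F : Type*} [TopologicalSpace X]
    [MeasurableSpace X] {μ : Measure X} [IsFiniteMeasureOnCompacts μ] [NormedAddCommGroup F]
    {f : X → F} (hf : MemLp f ⊤ μ) (hsupp : HasCompactSupport f) : Integrable f μ :=
  memLp_one_iff_integrable.mp <| hf.mono_exponent_of_measure_support_ne_top
    (fun _ hx => image_eq_zero_of_notMem_tsupport hx) hsupp.isCompact.measure_lt_top.ne le_top

namespace TwistedHilbertModule

variable {G : Type*} [Group G] [TopologicalSpace G] [MeasurableSpace G]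
  {B : Type*} [NonUnitalCStarAlgebra B] [PartialOrder B] [StarOrderedRing B]
  {T : TwistedSystem G B}
  {E : Type*} [NormedAddCommGroup E] [NormedSpace ℂ E] [CompleteSpace E]
  [SMul Bᵐᵒᵖ E] [OldCStarModule B E]

lemma γ_zero (M : TwistedHilbertModule T E) (s : G) : M.γ s 0 = 0 := by
  simpa using M.γ_add s 0 0

lemma norm_γ (M : TwistedHilbertModule T E) (s : G) (x : E) : ‖M.γ s x‖ = ‖x‖ := by
  simpa [M.γ_zero, dist_zero_right] using (M.γ_isometry s).dist_eq x 0

end TwistedHilbertModule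

theorem bra_ket_adjoint_identity_general
    {G : Type*} [TopologicalSpace G] [Group G]
    [MeasurableSpace G] (μ : Measure G) [μ.IsHaarMeasure]
    {B : Type*} [NonUnitalCStarAlgebra B] [PartialOrder B] [StarOrderedRing B]
    {E : Type*} [NormedAddCommGroup E] [NormedSpace ℂ E] [CompleteSpace E]
    [SMul Bᵐᵒᵖ E] [OldCStarModule B E]
    (T : TwistedSystem G B) (M : TwistedHilbertModule T E) (ξ : E)
    (f : G → B) (hf_bdd : MemLp f ⊤ μ) (hf_supp : HasCompactSupport f) (ζ : E) :
    ∫ x, star (f x) * (inner B (M.γ x ξ) ζ : B) ∂μ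
      = (inner B (∫ x, M.γ x ξ <• f x ∂μ) ζ : B) := by
  have hint : Integrable (fun x => M.γ x ξ <• f x) μ :=
    (hf_bdd.integrable_of_hasCompactSupport hf_supp).bdd_op_smul
      (M.γ_strMeas ξ).aestronglyMeasurable (.of_forall fun x => (M.norm_γ x ξ).le)
  rw [← OldCStarModule.integral_inner_left hint]
  simp only [OldCStarModule.inner_op_smul_left]

/-- the bra–ket adjoint identity `⟨[f], Bra(ξ) ζ⟩_{L²} = ⟨Ket(ξ)[f], ζ⟩_E`
for square-integrable `ξ`, `f ∈ L^{∞,c}(G,B)` and `ζ ∈ E`, where `Bra(ξ)ζ = [x ↦ ⟨γ_x ξ, ζ⟩]`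
and `Ket(ξ)[f] = ∫ γ_x(ξ)·f(x) dx`. -/
theorem bra_ket_adjoint_identity
    {G : Type*} [TopologicalSpace G] [T2Space G] [LocallyCompactSpace G]
    [SecondCountableTopology G] [Group G] [IsTopologicalGroup G]
    [MeasurableSpace G] [BorelSpace G] (μ : Measure G) [μ.IsHaarMeasure]
    {B : Type*} [NonUnitalCStarAlgebra B] [PartialOrder B] [StarOrderedRing B]
    [TopologicalSpace.SeparableSpace B]
    {E : Type*} [NormedAddCommGroup E] [NormedSpace ℂ E] [CompleteSpace E]
    [SMul Bᵐᵒᵖ E] [OldCStarModule B E]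
    (T : TwistedSystem G B) (M : TwistedHilbertModule T E) (ξ : E)
    (hsi : ∀ ζ : E, MemLp (fun x => (inner B (M.γ x ξ) ζ : B)) 2 μ)
    (f : G → B) (hf_bdd : MemLp f ⊤ μ) (hf_supp : HasCompactSupport f) (ζ : E) :
    ∫ x, star (f x) * (inner B (M.γ x ξ) ζ : B) ∂μ
      = (inner B (∫ x, M.γ x ξ <• f x ∂μ) ζ : B) :=
  bra_ket_adjoint_identity_general μ T M ξ f hf_bdd hf_supp ζ
end

section
/- Let A be a C*-algebra of adjointable operators on a Hilbert module L, and let F ⊆ Adj(L, E) be a closed linear subspace of adjointable operators from L to another Hilbert module E such that F ∘ A ⊆ F and F* ∘ F ⊆ A. Then F, with right A-action ξ · a = ξ ∘ a and A-valued inner product ⟨ξ, η⟩ = ξ* ∘ η, is a Hilbert A-module, and the Hilbert-module norm coincides with the operator norm. Moreover F = F ∘ F* ∘ F. -/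
open scoped RightActions

/-- The Mathlib (Dec 2024) notion of a Hilbert C⋆-module with a right action, restated because
Mathlib's `CStarModule` now uses a left action `[SMul A E]`. -/
class CStarModuleRight (A E : Type*) [NonUnitalSemiring A] [StarRing A]
    [Module ℂ A] [AddCommGroup E] [Module ℂ E] [PartialOrder A] [SMul Aᵐᵒᵖ E] [Norm A] [Norm E]
    extends Inner A E where
  inner_add_right {x} {y} {z} : inner x (y + z) = inner x y + inner x z
  inner_self_nonneg {x} : 0 ≤ inner x x
  inner_self {x} : inner x x = 0 ↔ x = 0
  inner_op_smul_right {a : A} {x y : E} : inner x (y <• a) = inner x y * a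
  inner_smul_right_complex {z : ℂ} {x} {y} : inner x (z • y) = z • inner x y
  star_inner x y : star (inner x y) = inner y x
  norm_eq_sqrt_norm_inner_self x : ‖x‖ = √‖inner x x‖

/-!
Adjointable operators on `L` form a unital C⋆-algebra in which the Gram operator `a = ξ* ∘ ξ` of
`ξ ∈ F` is self-adjoint, and the C⋆-identity for the pair `(ξ, ξ*)` gives
`‖ξ ∘ c‖² = ‖c* a c‖`, so `‖ξ ∘ f(a)‖² ≤ sup |t| f(t)²` over the spectrum. Let
`u_δ(t) = ∛t / (∛t² + δ²)`, an approximation of `t^(-1/3)` (the odd real cube root makes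
positivity of `a` unnecessary). Since `|t| (u_δ - u_γ)(t)² ≤ max δ γ`, the elements
`ξ ∘ u_δ(a) ∈ F` converge to some `η ∈ F`, and their adjoints to `η*`. Finally
`(ξ ∘ u_δ(a)) ∘ (ξ ∘ u_δ(a))* ∘ (ξ ∘ u_δ(a)) = ξ ∘ (t u_δ(t)³)(a)`, which tends to `ξ` because
`|t| (t u_δ(t)³ - 1)² ≤ 9 δ³`; hence `ξ = η ∘ η* ∘ η`.
-/

open Filter Topology

instance CStarModuleRight.toCStarModuleMulOpposite {A E : Type*} [NonUnitalCStarAlgebra A]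
    [PartialOrder A] [AddCommGroup E] [Module ℂ E] [SMul Aᵐᵒᵖ E] [Norm E]
    [CStarModuleRight A E] : CStarModule Aᵐᵒᵖ E where
  inner x y := MulOpposite.op (inner A x y)
  inner_add_right := congrArg MulOpposite.op CStarModuleRight.inner_add_right
  inner_self_nonneg := MulOpposite.op_nonneg.mpr CStarModuleRight.inner_self_nonneg
  inner_self := MulOpposite.op_eq_zero_iff _ |>.trans CStarModuleRight.inner_self
  inner_op_smul_right {a x y} := by
    simpa using congrArg MulOpposite.op
      (CStarModuleRight.inner_op_smul_right (a := a.unop) (x := x) (y := y))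
  inner_smul_right_complex := congrArg MulOpposite.op CStarModuleRight.inner_smul_right_complex
  star_inner x y := congrArg MulOpposite.op (CStarModuleRight.star_inner x y)
  norm_eq_sqrt_norm_inner_self x := by
    rw [MulOpposite.norm_op]; exact CStarModuleRight.norm_eq_sqrt_norm_inner_self x

lemma Filter.Tendsto.clm_comp {ι X Y Z : Type*} [NormedAddCommGroup X] [NormedSpace ℂ X]
    [NormedAddCommGroup Y] [NormedSpace ℂ Y] [NormedAddCommGroup Z] [NormedSpace ℂ Z]
    {l : Filter ι} {g : ι → Y →L[ℂ] Z} {f : ι → X →L[ℂ] Y} {g₀ : Y →L[ℂ] Z} {f₀ : X →L[ℂ] Y}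
    (hg : Tendsto g l (𝓝 g₀)) (hf : Tendsto f l (𝓝 f₀)) :
    Tendsto (fun i => (g i).comp (f i)) l (𝓝 (g₀.comp f₀)) :=
  ((ContinuousLinearMap.compL ℂ X Y Z).continuous₂.tendsto (g₀, f₀)).comp (hg.prodMk_nhds hf)

lemma tendsto_pow_three_atBot : Tendsto (fun x : ℝ => x ^ 3) atBot atBot :=
  tendsto_atBot_mono' atBot ((eventually_le_atBot (-1)).mono fun x hx => show x ^ 3 ≤ x by
    nlinarith [mul_nonneg (by linarith : (0 : ℝ) ≤ -x - 1) (by nlinarith : (0 : ℝ) ≤ x ^ 2 - x)])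
    tendsto_id

noncomputable def cubeOrderIso : ℝ ≃o ℝ :=
  StrictMono.orderIsoOfSurjective (· ^ 3) (Odd.strictMono_pow (by decide)) <|
    (continuous_pow 3).surjective (tendsto_pow_atTop (by norm_num)) tendsto_pow_three_atBot

noncomputable def cbrt : ℝ → ℝ := cubeOrderIso.symm

lemma continuous_cbrt : Continuous cbrt := cubeOrderIso.symm.continuous

@[simp] lemma pow_three_cbrt (t : ℝ) : cbrt t ^ 3 = t := cubeOrderIso.apply_symm_apply t

@[simp] lemma cbrt_pow_three (s : ℝ) : cbrt (s ^ 3) = s := cubeOrderIso.symm_apply_apply s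

@[simp] lemma cbrt_zero : cbrt 0 = 0 := by
  simpa using cbrt_pow_three 0

lemma mul_pow_three_le_sq_add_sq_sq (a b : ℝ) : a * b ^ 3 ≤ (a ^ 2 + b ^ 2) ^ 2 := by
  nlinarith [sq_nonneg (b * (b - a / 2)), sq_nonneg a, sq_nonneg (a * b)]

noncomputable def invCbrtApprox (δ t : ℝ) : ℝ := cbrt t / (cbrt t ^ 2 + δ ^ 2)

lemma continuous_invCbrtApprox {δ : ℝ} (hδ : δ ≠ 0) : Continuous (invCbrtApprox δ) :=
  continuous_cbrt.div ((continuous_cbrt.pow 2).add continuous_const) fun _ => by positivity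

@[simp] lemma invCbrtApprox_zero (δ : ℝ) : invCbrtApprox δ 0 = 0 := by simp [invCbrtApprox]

lemma abs_mul_sq_invCbrtApprox_sub_le {γ δ : ℝ} (hγ : 0 < γ) (hγδ : γ ≤ δ) (t : ℝ) :
    |t| * (invCbrtApprox δ t - invCbrtApprox γ t) ^ 2 ≤ δ := by
  obtain ⟨s, rfl⟩ : ∃ s, s ^ 3 = t := ⟨cbrt t, pow_three_cbrt t⟩
  have hδ : 0 < δ := hγ.trans_le hγδ
  have hdiff : invCbrtApprox δ (s ^ 3) - invCbrtApprox γ (s ^ 3)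
      = s * (γ ^ 2 - δ ^ 2) / ((s ^ 2 + δ ^ 2) * (s ^ 2 + γ ^ 2)) := by
    simp only [invCbrtApprox, cbrt_pow_three]
    field_simp; ring
  rw [hdiff, div_pow, mul_pow, mul_pow, abs_pow, ← sq_abs s, ← mul_div_assoc,
    div_le_iff₀ (by positivity)]
  set a := |s|
  have h1 : (γ ^ 2 - δ ^ 2) ^ 2 ≤ δ ^ 4 := by
    calc (γ ^ 2 - δ ^ 2) ^ 2 = (δ ^ 2 - γ ^ 2) ^ 2 := by ring
      _ ≤ (δ ^ 2) ^ 2 := by gcongr <;> nlinarith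
      _ = δ ^ 4 := by ring
  have h2 : a ^ 4 ≤ (a ^ 2 + γ ^ 2) ^ 2 := by nlinarith [sq_nonneg γ, sq_nonneg a]
  calc a ^ 3 * (a ^ 2 * (γ ^ 2 - δ ^ 2) ^ 2) ≤ a ^ 3 * (a ^ 2 * δ ^ 4) := by gcongr
    _ = a ^ 4 * δ * (a * δ ^ 3) := by ring
    _ ≤ (a ^ 2 + γ ^ 2) ^ 2 * δ * (a ^ 2 + δ ^ 2) ^ 2 := by
      gcongr; exact mul_pow_three_le_sq_add_sq_sq a δ
    _ = δ * ((a ^ 2 + δ ^ 2) ^ 2 * (a ^ 2 + γ ^ 2) ^ 2) := by ring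

lemma abs_mul_sq_mul_invCbrtApprox_pow_three_sub_one_le {δ : ℝ} (hδ : 0 < δ) (t : ℝ) :
    |t| * (t * invCbrtApprox δ t ^ 3 - 1) ^ 2 ≤ 9 * δ ^ 3 := by
  obtain ⟨s, rfl⟩ : ∃ s, s ^ 3 = t := ⟨cbrt t, pow_three_cbrt t⟩
  have hp : 0 < s ^ 2 + δ ^ 2 := by positivity
  set x := s ^ 2 / (s ^ 2 + δ ^ 2) with hx
  have hx0 : 0 ≤ x := by positivity
  have hx1 : x ≤ 1 := (div_le_one hp).mpr (by nlinarith)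
  have hcube : s ^ 3 * invCbrtApprox δ (s ^ 3) ^ 3 = x ^ 3 := by
    simp only [invCbrtApprox, cbrt_pow_three, hx]; field_simp
  have h1x : 1 - x = δ ^ 2 / (|s| ^ 2 + δ ^ 2) := by rw [hx, sq_abs]; field_simp; ring
  have hbound : (x ^ 3 - 1) ^ 2 ≤ 9 * (1 - x) ^ 2 := by
    calc (x ^ 3 - 1) ^ 2 = (1 - x) ^ 2 * (1 + x + x ^ 2) ^ 2 := by ring
      _ ≤ (1 - x) ^ 2 * 3 ^ 2 := by gcongr; nlinarith
      _ = 9 * (1 - x) ^ 2 := by ring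
  rw [hcube, abs_pow]
  calc |s| ^ 3 * (x ^ 3 - 1) ^ 2 ≤ |s| ^ 3 * (9 * (1 - x) ^ 2) := by gcongr
    _ = 9 * δ ^ 3 * (δ * |s| ^ 3 / (|s| ^ 2 + δ ^ 2) ^ 2) := by rw [h1x]; field_simp
    _ ≤ 9 * δ ^ 3 * 1 := by
      gcongr
      rw [div_le_one (by positivity), add_comm]
      exact mul_pow_three_le_sq_add_sq_sq δ |s|
    _ = 9 * δ ^ 3 := mul_one _

lemma abs_mul_sq_invCbrtApprox_sub_le_max {γ δ : ℝ} (hγ : 0 < γ) (hδ : 0 < δ) (t : ℝ) :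
    |t| * (invCbrtApprox δ t - invCbrtApprox γ t) ^ 2 ≤ max δ γ := by
  rcases le_total γ δ with hγδ | hδγ
  · exact (abs_mul_sq_invCbrtApprox_sub_le hγ hγδ t).trans (le_max_left _ _)
  · rw [← neg_sub, neg_sq]
    exact (abs_mul_sq_invCbrtApprox_sub_le hδ hδγ t).trans (le_max_right _ _)

lemma continuous_invCbrtApprox_nat (n : ℕ) : Continuous (invCbrtApprox (1 / ((n : ℝ) + 1))) :=
  continuous_invCbrtApprox (by positivity)

lemma cfc_mem_of_map_zero {𝒞 : Type*} [CStarAlgebra 𝒞] {s : NonUnitalStarSubalgebra ℂ 𝒞}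
    [IsClosed (s : Set 𝒞)] {a : 𝒞} (ha : a ∈ s) (f : ℝ → ℝ)
    (hf : ContinuousOn f (quasispectrum ℝ a)) (hf0 : f 0 = 0) : cfc f a ∈ s := by
  rw [← cfcₙ_eq_cfc hf hf0]
  exact cfcₙ_mem f ha

section HilbertModule

variable {𝒜 : Type*} [NonUnitalCStarAlgebra 𝒜] [PartialOrder 𝒜]
  {L E M : Type*} [NormedAddCommGroup L] [NormedSpace ℂ L] [SMul 𝒜 L] [CStarModule 𝒜 L]
  [NormedAddCommGroup E] [NormedSpace ℂ E] [SMul 𝒜 E] [CStarModule 𝒜 E]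
  [NormedAddCommGroup M] [NormedSpace ℂ M] [SMul 𝒜 M] [CStarModule 𝒜 M]
  {T T' : L →L[ℂ] E} {S S' : E →L[ℂ] L}

variable (𝒜) in
def IsAdjointPair (T : L →L[ℂ] E) (S : E →L[ℂ] L) : Prop :=
  ∀ x y, inner 𝒜 (T x) y = inner 𝒜 x (S y)

namespace IsAdjointPair

lemma symm (h : IsAdjointPair 𝒜 T S) : IsAdjointPair 𝒜 S T := fun y x => by
  rw [← CStarModule.star_inner, ← h, CStarModule.star_inner]

lemma comp {T₂ : E →L[ℂ] M} {S₂ : M →L[ℂ] E} (h₂ : IsAdjointPair 𝒜 T₂ S₂)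
    (h : IsAdjointPair 𝒜 T S) : IsAdjointPair 𝒜 (T₂.comp T) (S.comp S₂) := fun x y =>
  (h₂ (T x) y).trans (h x (S₂ y))

lemma add (h : IsAdjointPair 𝒜 T S) (h' : IsAdjointPair 𝒜 T' S') :
    IsAdjointPair 𝒜 (T + T') (S + S') := fun x y => by
  simp [CStarModule.inner_add_left, h x y, h' x y]

lemma sub (h : IsAdjointPair 𝒜 T S) (h' : IsAdjointPair 𝒜 T' S') :
    IsAdjointPair 𝒜 (T - T') (S - S') := fun x y => by
  simp [CStarModule.inner_sub_left, CStarModule.inner_sub_right, h x y, h' x y]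

lemma smul (c : ℂ) (h : IsAdjointPair 𝒜 T S) : IsAdjointPair 𝒜 (c • T) (star c • S) :=
  fun x y => by simp [h x y]

lemma id : IsAdjointPair 𝒜 (ContinuousLinearMap.id ℂ L) (ContinuousLinearMap.id ℂ L) :=
  fun _ _ => rfl

lemma unique (h : IsAdjointPair 𝒜 T S) (h' : IsAdjointPair 𝒜 T S') : S = S' := by
  ext y
  have hzero : ∀ x, inner 𝒜 x (S y - S' y) = 0 := fun x => by
    rw [CStarModule.inner_sub_right, ← h, ← h', sub_self]
  exact sub_eq_zero.mp (CStarModule.inner_self.mp (hzero _))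

end IsAdjointPair

variable (𝒜 L) in
def adjointable : Subalgebra ℂ (L →L[ℂ] L) where
  carrier := {T | ∃ S, IsAdjointPair 𝒜 T S}
  mul_mem' := fun ⟨S, h⟩ ⟨S', h'⟩ => ⟨S'.comp S, h.comp h'⟩
  add_mem' := fun ⟨S, h⟩ ⟨S', h'⟩ => ⟨S + S', h.add h'⟩
  algebraMap_mem' c := ⟨star c • 1, by
    rw [Algebra.algebraMap_eq_smul_one]; exact IsAdjointPair.id.smul c⟩

namespace adjointable

noncomputable instance : Star (adjointable 𝒜 L) where
  star T := ⟨T.2.choose, T, T.2.choose_spec.symm⟩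

lemma isAdjointPair_star (T : adjointable 𝒜 L) :
    IsAdjointPair 𝒜 (T : L →L[ℂ] L) (star T : adjointable 𝒜 L) :=
  T.2.choose_spec

lemma coe_star_eq {T : adjointable 𝒜 L} {S : L →L[ℂ] L} (h : IsAdjointPair 𝒜 (T : L →L[ℂ] L) S) :
    ((star T : adjointable 𝒜 L) : L →L[ℂ] L) = S :=
  (isAdjointPair_star T).unique h

noncomputable instance : StarRing (adjointable 𝒜 L) where
  star_involutive T := Subtype.ext <| coe_star_eq (isAdjointPair_star T).symm
  star_mul T T' := Subtype.ext <| coe_star_eq <|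
    (isAdjointPair_star T).comp (isAdjointPair_star T')
  star_add T T' := Subtype.ext <| coe_star_eq <|
    (isAdjointPair_star T).add (isAdjointPair_star T')

instance : StarModule ℂ (adjointable 𝒜 L) where
  star_smul c T := Subtype.ext <| coe_star_eq <| (isAdjointPair_star T).smul c

def starSubalgebraOfSet (A : Set (L →L[ℂ] L)) (h0 : 0 ∈ A)
    (hadd : ∀ a ∈ A, ∀ b ∈ A, a + b ∈ A) (hsmul : ∀ (c : ℂ), ∀ a ∈ A, c • a ∈ A)
    (hmul : ∀ a ∈ A, ∀ b ∈ A, a.comp b ∈ A) (hstar : ∀ a ∈ A, ∃ b ∈ A, IsAdjointPair 𝒜 a b) :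
    NonUnitalStarSubalgebra ℂ (adjointable 𝒜 L) where
  carrier := {c | (c : L →L[ℂ] L) ∈ A}
  zero_mem' := h0
  add_mem' ha hb := hadd _ ha _ hb
  mul_mem' ha hb := hmul _ ha _ hb
  smul_mem' c _ ha := hsmul c _ ha
  star_mem' {a} ha := by
    obtain ⟨b, hb, hab⟩ := hstar _ ha
    rwa [Set.mem_ofPred_eq, coe_star_eq hab]

lemma isClosed_starSubalgebraOfSet {A : Set (L →L[ℂ] L)} (hA : IsClosed A) (h0 : 0 ∈ A)
    (hadd : ∀ a ∈ A, ∀ b ∈ A, a + b ∈ A) (hsmul : ∀ (c : ℂ), ∀ a ∈ A, c • a ∈ A)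
    (hmul : ∀ a ∈ A, ∀ b ∈ A, a.comp b ∈ A) (hstar : ∀ a ∈ A, ∃ b ∈ A, IsAdjointPair 𝒜 a b) :
    IsClosed (starSubalgebraOfSet A h0 hadd hsmul hmul hstar : Set (adjointable 𝒜 L)) :=
  hA.preimage continuous_subtype_val

end adjointable

namespace IsAdjointPair

def gram (h : IsAdjointPair 𝒜 T S) : adjointable 𝒜 L := ⟨S.comp T, S.comp T, h.symm.comp h⟩

lemma isSelfAdjoint_gram (h : IsAdjointPair 𝒜 T S) : IsSelfAdjoint h.gram :=
  Subtype.ext <| adjointable.coe_star_eq (h.symm.comp h)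

end IsAdjointPair

variable [StarOrderedRing 𝒜]

namespace IsAdjointPair

lemma norm_sq_le_norm_comp (h : IsAdjointPair 𝒜 T S) : ‖T‖ ^ 2 ≤ ‖S.comp T‖ := by
  have hT : ‖T‖ ≤ √‖S.comp T‖ := by
    refine T.opNorm_le_bound (Real.sqrt_nonneg _) fun x => ?_
    rw [← Real.sqrt_sq (norm_nonneg x), ← Real.sqrt_mul (norm_nonneg _)]
    refine Real.le_sqrt_of_sq_le ?_
    calc ‖T x‖ ^ 2 = ‖inner 𝒜 x (S (T x))‖ := by rw [CStarModule.norm_sq_eq 𝒜, h]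
      _ ≤ ‖x‖ * ‖S (T x)‖ := CStarModule.norm_inner_le L
      _ ≤ ‖x‖ * (‖S.comp T‖ * ‖x‖) := by gcongr; exact (S.comp T).le_opNorm x
      _ = ‖S.comp T‖ * ‖x‖ ^ 2 := by ring
  calc ‖T‖ ^ 2 ≤ √‖S.comp T‖ ^ 2 := by gcongr
    _ = ‖S.comp T‖ := Real.sq_sqrt (norm_nonneg _)

lemma norm_le (h : IsAdjointPair 𝒜 T S) : ‖S‖ ≤ ‖T‖ := by
  have := h.symm.norm_sq_le_norm_comp.trans (T.opNorm_comp_le S)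
  nlinarith [norm_nonneg S, norm_nonneg T]

lemma norm_eq (h : IsAdjointPair 𝒜 T S) : ‖S‖ = ‖T‖ :=
  le_antisymm h.norm_le h.symm.norm_le

lemma norm_sq_eq_norm_comp (h : IsAdjointPair 𝒜 T S) : ‖T‖ ^ 2 = ‖S.comp T‖ :=
  le_antisymm h.norm_sq_le_norm_comp <| by
    simpa [h.norm_eq, sq] using S.opNorm_comp_le T

lemma sq_norm_comp_eq (h : IsAdjointPair 𝒜 T S) (c : adjointable 𝒜 L) :
    ‖T.comp (c : L →L[ℂ] L)‖ ^ 2 = ‖star c * h.gram * c‖ :=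
  (h.comp (adjointable.isAdjointPair_star c)).norm_sq_eq_norm_comp

end IsAdjointPair

lemma IsAdjointPair.tendsto_of_tendsto {ι : Type*} {l : Filter ι} {T : ι → L →L[ℂ] E}
    {S : ι → E →L[ℂ] L} {T₀ : L →L[ℂ] E} {S₀ : E →L[ℂ] L} (h₀ : IsAdjointPair 𝒜 T₀ S₀)
    (h : ∀ i, IsAdjointPair 𝒜 (T i) (S i)) (hT : Tendsto T l (𝓝 T₀)) : Tendsto S l (𝓝 S₀) := by
  rw [tendsto_iff_norm_sub_tendsto_zero] at hT ⊢
  simpa only [((h _).sub h₀).norm_eq] using hT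

lemma isClosed_setOf_isAdjointPair :
    IsClosed {p : (L →L[ℂ] E) × (E →L[ℂ] L) | IsAdjointPair 𝒜 p.1 p.2} := by
  simp only [IsAdjointPair, Set.ofPred_forall]
  exact isClosed_iInter fun x => isClosed_iInter fun y => isClosed_eq
    (CStarModule.continuous_inner.comp ((continuous_fst.clm_apply continuous_const).prodMk
      continuous_const))
    (CStarModule.continuous_inner.comp (continuous_const.prodMk
      (continuous_snd.clm_apply continuous_const)))

lemma isClosed_adjointable [CompleteSpace L] :
    IsClosed (adjointable 𝒜 L : Set (L →L[ℂ] L)) := by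
  refine isSeqClosed_iff_isClosed.mp fun {T T₀} hT hlim => ?_
  choose S hS using hT
  have hdist : (fun p : ℕ × ℕ => dist (S p.1) (S p.2)) = fun p => dist (T p.1) (T p.2) :=
    funext fun p => by simp only [dist_eq_norm, ((hS p.1).sub (hS p.2)).norm_eq]
  have hS_cauchy : CauchySeq S := cauchySeq_iff_tendsto_dist_atTop_0.mpr <|
    hdist ▸ cauchySeq_iff_tendsto_dist_atTop_0.mp hlim.cauchySeq
  obtain ⟨S₀, hS₀⟩ := cauchySeq_tendsto_of_complete hS_cauchy
  exact ⟨S₀, isClosed_setOf_isAdjointPair.mem_of_tendsto (hlim.prodMk_nhds hS₀)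
    (Eventually.of_forall hS)⟩

namespace adjointable

instance : CStarRing (adjointable 𝒜 L) where
  norm_mul_self_le T := by
    have := (isAdjointPair_star T).norm_sq_le_norm_comp
    rwa [sq] at this

instance [CompleteSpace L] : CompleteSpace (adjointable 𝒜 L) :=
  isClosed_adjointable.completeSpace_coe

noncomputable instance [CompleteSpace L] : CStarAlgebra (adjointable 𝒜 L) where

end adjointable

namespace IsAdjointPair

variable [CompleteSpace L] (h : IsAdjointPair 𝒜 T S)

lemma sq_norm_comp_cfc_le {f : ℝ → ℝ}
    (hf : ContinuousOn f (spectrum ℝ h.gram)) {M : ℝ} (hM0 : 0 ≤ M)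
    (hM : ∀ t ∈ spectrum ℝ h.gram, |t| * f t ^ 2 ≤ M) :
    ‖T.comp (cfc f h.gram : adjointable 𝒜 L).val‖ ^ 2 ≤ M := by
  have hg := h.isSelfAdjoint_gram
  have hprod : cfc f h.gram * h.gram * cfc f h.gram = cfc (fun t => f t * t * f t) h.gram := by
    rw [cfc_mul (fun t => f t * t) f h.gram (hf.mul continuousOn_id) hf,
      cfc_mul f (fun t => t) h.gram hf continuousOn_id, cfc_id' ℝ h.gram]
  rw [h.sq_norm_comp_eq, (cfc_predicate f h.gram).star_eq, hprod]
  refine norm_cfc_le hM0 fun t ht => ?_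
  rw [Real.norm_eq_abs, show f t * t * f t = t * f t ^ 2 by ring, abs_mul, abs_sq]
  exact hM t ht

noncomputable def approxInvCbrtGram (n : ℕ) : adjointable 𝒜 L :=
  cfc (invCbrtApprox (1 / ((n : ℝ) + 1))) h.gram

lemma isSelfAdjoint_approxInvCbrtGram (n : ℕ) : IsSelfAdjoint (h.approxInvCbrtGram n) :=
  cfc_predicate _ _

lemma cauchySeq_comp_approxInvCbrtGram :
    CauchySeq fun n => T.comp (h.approxInvCbrtGram n : L →L[ℂ] L) := by
  refine cauchySeq_of_le_tendsto_0 (fun N => √(1 / ((N : ℝ) + 1))) (fun n m N hn hm => ?_) ?_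
  · rw [dist_eq_norm, ← ContinuousLinearMap.comp_sub, ← Subalgebra.coe_sub, approxInvCbrtGram,
      approxInvCbrtGram, ← cfc_sub _ _ h.gram (continuous_invCbrtApprox_nat n).continuousOn
        (continuous_invCbrtApprox_nat m).continuousOn]
    refine Real.le_sqrt_of_sq_le <| h.sq_norm_comp_cfc_le
      ((continuous_invCbrtApprox_nat n).sub (continuous_invCbrtApprox_nat m)).continuousOn
      (by positivity) fun t _ => ?_
    exact (abs_mul_sq_invCbrtApprox_sub_le_max (by positivity) (by positivity) t).trans
      (max_le (Nat.one_div_le_one_div hn) (Nat.one_div_le_one_div hm))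
  · exact (Real.continuous_sqrt.tendsto' 0 0 Real.sqrt_zero).comp
      tendsto_one_div_add_atTop_nhds_zero_nat

lemma approxInvCbrtGram_mul_gram_mul_sub_one (n : ℕ) :
    h.approxInvCbrtGram n * h.approxInvCbrtGram n * h.gram * h.approxInvCbrtGram n - 1
      = cfc (fun t => t * invCbrtApprox (1 / ((n : ℝ) + 1)) t ^ 3 - 1) h.gram := by
  set φ := invCbrtApprox (1 / ((n : ℝ) + 1))
  have hφ : Continuous φ := continuous_invCbrtApprox_nat n
  have hg := h.isSelfAdjoint_gram
  rw [show (fun t => t * φ t ^ 3 - 1) = fun t => φ t * φ t * t * φ t - 1 from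
      funext fun t => by ring,
    cfc_sub (fun t => φ t * φ t * t * φ t) (fun _ => 1) h.gram (by fun_prop) (by fun_prop),
    cfc_const_one ℝ h.gram, cfc_mul (fun t => φ t * φ t * t) φ h.gram (by fun_prop) (by fun_prop),
    cfc_mul (fun t => φ t * φ t) (fun t => t) h.gram (by fun_prop) (by fun_prop),
    cfc_mul φ φ h.gram (by fun_prop) (by fun_prop), cfc_id' ℝ h.gram]
  rfl

lemma tendsto_comp_approxInvCbrtGram_mul :
    Tendsto (fun n => T.comp (h.approxInvCbrtGram n * h.approxInvCbrtGram n * h.gram *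
      h.approxInvCbrtGram n : adjointable 𝒜 L).val) atTop (𝓝 T) := by
  rw [tendsto_iff_norm_sub_tendsto_zero]
  refine squeeze_zero (fun _ => norm_nonneg _) (fun n => ?_)
    ((((continuous_pow 3).const_mul 9).sqrt.tendsto' 0 0 (by simp)).comp
      tendsto_one_div_add_atTop_nhds_zero_nat)
  have hsub (X : adjointable 𝒜 L) : T.comp (X : L →L[ℂ] L) - T = T.comp (X - 1).val := by
    rw [Subalgebra.coe_sub, Subalgebra.coe_one, ContinuousLinearMap.comp_sub,
      ContinuousLinearMap.one_def, ContinuousLinearMap.comp_id]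
  have hφ := continuous_invCbrtApprox_nat n
  rw [hsub, approxInvCbrtGram_mul_gram_mul_sub_one]
  exact Real.le_sqrt_of_sq_le <| h.sq_norm_comp_cfc_le (by fun_prop)
    (by positivity) fun t _ => abs_mul_sq_mul_invCbrtApprox_pow_three_sub_one_le (by positivity) t

end IsAdjointPair

variable [CompleteSpace L] [CompleteSpace E]

theorem exists_eq_comp_adjoint_comp {F : Set (L →L[ℂ] E)} (hF : IsClosed F)
    {adj : (L →L[ℂ] E) → (E →L[ℂ] L)} (hadj : ∀ η ∈ F, IsAdjointPair 𝒜 η (adj η))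
    {s : NonUnitalStarSubalgebra ℂ (adjointable 𝒜 L)} [IsClosed (s : Set (adjointable 𝒜 L))]
    {ξ : L →L[ℂ] E} (hξ : ξ ∈ F) (hξs : ∀ c ∈ s, ξ.comp (c : L →L[ℂ] L) ∈ F)
    (hgram : (hadj ξ hξ).gram ∈ s) :
    ∃ η ∈ F, ξ = η.comp ((adj η).comp η) := by
  have h := hadj ξ hξ
  have hc (n : ℕ) : h.approxInvCbrtGram n ∈ s := cfc_mem_of_map_zero hgram _
    (continuous_invCbrtApprox_nat n).continuousOn (invCbrtApprox_zero _)
  obtain ⟨η, hη⟩ := cauchySeq_tendsto_of_complete h.cauchySeq_comp_approxInvCbrtGram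
  have hηF : η ∈ F := hF.mem_of_tendsto hη (Eventually.of_forall fun n => hξs _ (hc n))
  have hpair (n : ℕ) : IsAdjointPair 𝒜 (ξ.comp (h.approxInvCbrtGram n : L →L[ℂ] L))
      ((h.approxInvCbrtGram n : L →L[ℂ] L).comp (adj ξ)) := by
    have := h.comp (adjointable.isAdjointPair_star (h.approxInvCbrtGram n))
    rwa [(h.isSelfAdjoint_approxInvCbrtGram n).star_eq] at this
  have hadj_lim := (hadj η hηF).tendsto_of_tendsto hpair hη
  exact ⟨η, hηF, tendsto_nhds_unique h.tendsto_comp_approxInvCbrtGram_mul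
    (hη.clm_comp (hadj_lim.clm_comp hη))⟩

end HilbertModule

lemma CStarModuleRight.isAdjointPair_mulOpposite {B L E : Type*} [NonUnitalCStarAlgebra B]
    [PartialOrder B] [NormedAddCommGroup L] [NormedSpace ℂ L] [SMul Bᵐᵒᵖ L]
    [CStarModuleRight B L] [NormedAddCommGroup E] [NormedSpace ℂ E] [SMul Bᵐᵒᵖ E]
    [CStarModuleRight B E] {T : L →L[ℂ] E} {S : E →L[ℂ] L}
    (h : ∀ x y, (inner B (T x) y : B) = inner B x (S y)) : IsAdjointPair Bᵐᵒᵖ T S :=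
  fun x y => congrArg MulOpposite.op (h x y)

theorem concrete_hilbert_module_norm_and_triple_factorization_general
    {B : Type*} [NonUnitalCStarAlgebra B] [PartialOrder B] [StarOrderedRing B]
    {L : Type*} [NormedAddCommGroup L] [NormedSpace ℂ L] [CompleteSpace L]
    [SMul Bᵐᵒᵖ L] [CStarModuleRight B L]
    {E : Type*} [NormedAddCommGroup E] [NormedSpace ℂ E] [CompleteSpace E]
    [SMul Bᵐᵒᵖ E] [CStarModuleRight B E]
    (A : Set (L →L[ℂ] L)) (adjA : (L →L[ℂ] L) → (L →L[ℂ] L))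
    (hA_closed : IsClosed A)
    (hA_add : ∀ a ∈ A, ∀ a' ∈ A, a + a' ∈ A)
    (hA_smul : ∀ (c : ℂ), ∀ a ∈ A, c • a ∈ A)
    (hA_mul : ∀ a ∈ A, ∀ a' ∈ A, a.comp a' ∈ A)
    (hadjA : ∀ a ∈ A, (∀ (x y : L), (inner B (a x) y : B) = inner B x (adjA a y)) ∧ adjA a ∈ A)
    (F : Set (L →L[ℂ] E)) (adjF : (L →L[ℂ] E) → (E →L[ℂ] L))
    (hF_closed : IsClosed F)
    (hadjF : ∀ ξ ∈ F, ∀ (x : L) (y : E), (inner B (ξ x) y : B) = inner B x (adjF ξ y))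
    (hFA : ∀ ξ ∈ F, ∀ a ∈ A, ξ.comp a ∈ F)
    (hFF : ∀ ξ ∈ F, ∀ η ∈ F, (adjF ξ).comp η ∈ A) :
    (∀ ξ ∈ F, ‖ξ‖ ^ 2 = ‖(adjF ξ).comp ξ‖) ∧
    (∀ ξ ∈ F, ∃ ξ₁ ∈ F, ∃ ξ₂ ∈ F, ∃ ξ₃ ∈ F, ξ = ξ₁.comp ((adjF ξ₂).comp ξ₃)) ∧
    (∀ ξ₁ ∈ F, ∀ ξ₂ ∈ F, ∀ ξ₃ ∈ F, ξ₁.comp ((adjF ξ₂).comp ξ₃) ∈ F) := by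
  have hpair (ξ) (hξ : ξ ∈ F) : IsAdjointPair Bᵐᵒᵖ ξ (adjF ξ) :=
    CStarModuleRight.isAdjointPair_mulOpposite (hadjF ξ hξ)
  have hstar (a) (ha : a ∈ A) : ∃ b ∈ A, IsAdjointPair Bᵐᵒᵖ a b :=
    ⟨adjA a, (hadjA a ha).2, CStarModuleRight.isAdjointPair_mulOpposite (hadjA a ha).1⟩
  refine ⟨fun ξ hξ => (hpair ξ hξ).norm_sq_eq_norm_comp, fun ξ hξ => ?_,
    fun ξ₁ h₁ ξ₂ h₂ ξ₃ h₃ => hFA ξ₁ h₁ _ (hFF ξ₂ h₂ ξ₃ h₃)⟩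
  have h0 : (0 : L →L[ℂ] L) ∈ A := by simpa using hA_smul 0 _ (hFF ξ hξ ξ hξ)
  have := adjointable.isClosed_starSubalgebraOfSet hA_closed h0 hA_add hA_smul hA_mul hstar
  obtain ⟨η, hη, hξη⟩ := exists_eq_comp_adjoint_comp hF_closed hpair hξ
    (s := adjointable.starSubalgebraOfSet A h0 hA_add hA_smul hA_mul hstar)
    (fun c hc => hFA ξ hξ _ hc) (hFF ξ hξ ξ hξ)
  exact ⟨η, hη, η, hη, η, hη, hξη⟩

/-- Let `A` be a C*-algebra of adjointable operators on a Hilbert `B`-module `L`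
(with adjoint assignment `adjA`), and let `F` be a closed linear subspace of adjointable
operators `L → E` (with adjoint assignment `adjF`) such that `F ∘ A ⊆ F` and `F* ∘ F ⊆ A`.
Then `F`, with the `A`-valued inner product `⟨ξ, η⟩ = ξ* ∘ η` and right action `ξ·a = ξ ∘ a`,
is a Hilbert `A`-module whose Hilbert-module norm `‖⟨ξ,ξ⟩‖^{1/2}` coincides with the operator
norm, and `F = F ∘ F* ∘ F`. -/
theorem concrete_hilbert_module_norm_and_triple_factorization
    {B : Type*} [NonUnitalCStarAlgebra B] [PartialOrder B] [StarOrderedRing B]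
    {L : Type*} [NormedAddCommGroup L] [NormedSpace ℂ L] [CompleteSpace L]
    [SMul Bᵐᵒᵖ L] [CStarModuleRight B L]
    {E : Type*} [NormedAddCommGroup E] [NormedSpace ℂ E] [CompleteSpace E]
    [SMul Bᵐᵒᵖ E] [CStarModuleRight B E]
    (A : Set (L →L[ℂ] L)) (adjA : (L →L[ℂ] L) → (L →L[ℂ] L))
    (hA_closed : IsClosed A)
    (hA_add : ∀ a ∈ A, ∀ a' ∈ A, a + a' ∈ A)
    (hA_smul : ∀ (c : ℂ), ∀ a ∈ A, c • a ∈ A)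
    (hA_mul : ∀ a ∈ A, ∀ a' ∈ A, a.comp a' ∈ A)
    (hadjA : ∀ a ∈ A, (∀ (x y : L), (inner B (a x) y : B) = inner B x (adjA a y)) ∧ adjA a ∈ A)
    (F : Set (L →L[ℂ] E)) (adjF : (L →L[ℂ] E) → (E →L[ℂ] L))
    (hF_closed : IsClosed F)
    (hF_add : ∀ ξ ∈ F, ∀ η ∈ F, ξ + η ∈ F)
    (hF_smul : ∀ (c : ℂ), ∀ ξ ∈ F, c • ξ ∈ F)
    (hadjF : ∀ ξ ∈ F, ∀ (x : L) (y : E), (inner B (ξ x) y : B) = inner B x (adjF ξ y))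
    (hFA : ∀ ξ ∈ F, ∀ a ∈ A, ξ.comp a ∈ F)
    (hFF : ∀ ξ ∈ F, ∀ η ∈ F, (adjF ξ).comp η ∈ A) :
    (∀ ξ ∈ F, ‖ξ‖ ^ 2 = ‖(adjF ξ).comp ξ‖) ∧
    (∀ ξ ∈ F, ∃ ξ₁ ∈ F, ∃ ξ₂ ∈ F, ∃ ξ₃ ∈ F, ξ = ξ₁.comp ((adjF ξ₂).comp ξ₃)) ∧
    (∀ ξ₁ ∈ F, ∀ ξ₂ ∈ F, ∀ ξ₃ ∈ F, ξ₁.comp ((adjF ξ₂).comp ξ₃) ∈ F) :=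
  concrete_hilbert_module_norm_and_triple_factorization_general A adjA hA_closed hA_add hA_smul
    hA_mul hadjA F adjF hF_closed hadjF hFA hFF
end
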